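/- Let T be a (d₁,d₂)-biregular tree with d₁,d₂ ≥ 3 and Γ ≤ Aut(T) a geometrically finite tree lattice. Then the associated Markov chain (Mₙ) on EQ is positive recurrent, i.e. it admits a stationary probability measure. -/

import Mathlib

/-!
The weight `m e = ind e / N (∂₀ e)` is invariant under reversal of edges, since
`N (∂₁ e) = Δ(e) N (∂₀ e)` with `Δ(e) = ind ē / ind e`. By orbit–stabilizer, the edges of `Q`
leaving a vertex `v`, each counted `ind` times, are the `deg v` edges of `T` at a lift of `v`.
The only edges feeding into `f` are the reversals `ḡ` of the edges `g` leaving `v = ∂₀ f`; by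
reversal invariance `ḡ` carries mass `ind g / N v`, and
`∑_g ind g (ind f - [g = f]) = (deg v - 1) ind f`, so `m` is stationary. As degrees are
bounded, `∑_e m e = ∑_v deg v / N v` is finite by the lattice condition, and normalising `m`
gives a stationary probability measure.
-/

open Filter Topology MeasureTheory

attribute [local instance] Classical.propDecidable

namespace TreeDyn


variable {V : Type*}

/-- The type of directed edges of a simple graph. -/
def DEdge (T : SimpleGraph V) : Type _ := {p : V × V // T.Adj p.1 p.2}

/-- `T` is a `(d₁,d₂)`-biregular tree: a tree whose vertex set admits a bipartition such
that every vertex of one class has degree `d₁` and every vertex of the other class has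
degree `d₂`. -/
def IsBiregularTree (T : SimpleGraph V) (d₁ d₂ : ℕ) : Prop :=
  T.Connected ∧ T.IsAcyclic ∧
    ∃ c : V → Bool,
      (∀ u v, T.Adj u v → c u ≠ c v) ∧
      (∀ v, c v = true → Nat.card (T.neighborSet v) = d₁) ∧
      (∀ v, c v = false → Nat.card (T.neighborSet v) = d₂)

/-- A permutation of the vertices is an automorphism of `T` acting without edge
inversion if it preserves adjacency and moves every vertex an even distance. -/
def IsTreeAut (T : SimpleGraph V) (σ : Equiv.Perm V) : Prop :=
  (∀ u v, T.Adj (σ u) (σ v) ↔ T.Adj u v) ∧ ∀ v, Even (T.dist v (σ v))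

variable (T : SimpleGraph V) (Λ : Subgroup (Equiv.Perm V))

/-- Two vertices are related if they lie in the same `Λ`-orbit. -/
def vrel (u v : V) : Prop := ∃ γ ∈ Λ, γ u = v

/-- The vertex set of the quotient graph `Q = Λ∖T`. -/
def VQ := Quot (vrel Λ)

/-- Projection of vertices to the quotient graph. -/
def πV : V → VQ Λ := Quot.mk _

/-- Two directed edges are related if they lie in the same `Λ`-orbit. -/
def erel (e f : DEdge T) : Prop :=
  ∃ γ ∈ Λ, γ e.1.1 = f.1.1 ∧ γ e.1.2 = f.1.2

/-- The directed edge set of the quotient graph `Q = Λ∖T`. -/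
def EQ := Quot (erel T Λ)

/-- Projection of directed edges to the quotient graph. -/
def πE : DEdge T → EQ T Λ := Quot.mk _

/-- The initial vertex `∂₀ e` of a quotient edge. -/
noncomputable def tailQ (e : EQ T Λ) : VQ Λ := πV Λ (Quot.out e).1.1

/-- The terminal vertex `∂₁ e` of a quotient edge. -/
noncomputable def headQ (e : EQ T Λ) : VQ Λ := πV Λ (Quot.out e).1.2

/-- The reversal `ē` of a quotient edge. -/
noncomputable def barQ (e : EQ T Λ) : EQ T Λ :=
  πE T Λ ⟨((Quot.out e).1.2, (Quot.out e).1.1), (Quot.out e).2.symm⟩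

/-- The order of the stabilizer of a vertex in `Λ`. -/
noncomputable def stabV (v : V) : ℕ :=
  Nat.card {γ : Λ // (γ : Equiv.Perm V) v = v}

/-- The order of the pointwise stabilizer of a directed edge in `Λ`. -/
noncomputable def stabE (e : DEdge T) : ℕ :=
  Nat.card {γ : Λ // (γ : Equiv.Perm V) e.1.1 = e.1.1 ∧ (γ : Equiv.Perm V) e.1.2 = e.1.2}

/-- The index map of the edge-indexed graph: `ind e = [Λ_{∂₀ẽ} : Λ_ẽ]` for any lift `ẽ`. -/
noncomputable def indQ (e : EQ T Λ) : ℕ :=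
  stabV Λ (Quot.out e).1.1 / stabE T Λ (Quot.out e)

/-- The degree of a vertex of the quotient graph: the degree in `T` of any of its lifts. -/
noncomputable def degQ (v : VQ Λ) : ℕ := Nat.card (T.neighborSet (Quot.out v))

/-- `Δ(e) = ind(ē)/ind(e)`. -/
noncomputable def deltaQ (e : EQ T Λ) : ℝ :=
  (indQ T Λ (barQ T Λ e) : ℝ) / (indQ T Λ e : ℝ)

/-- `Λ` is a tree lattice: a discrete subgroup (finite vertex stabilizers) of `Aut T`
with finite covolume, i.e. `Σ_{v ∈ VQ} N_o(v)⁻¹ < ∞` where `N_o` is the multiplicative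
function along paths determined by `Δ`. -/
def IsTreeLattice : Prop :=
  (∀ γ ∈ Λ, IsTreeAut T γ) ∧
  (∀ v : V, Finite {γ : Λ // (γ : Equiv.Perm V) v = v}) ∧
  ∃ (o : VQ Λ) (N : VQ Λ → ℝ),
    N o = 1 ∧ (∀ v, 0 < N v) ∧
    (∀ e : EQ T Λ, N (headQ T Λ e) = deltaQ T Λ e * N (tailQ T Λ e)) ∧
    Summable (fun v : VQ Λ => (N v)⁻¹)

/-- The transition kernel of the Markov chain associated to `Λ` on the directed edges
of the quotient graph. -/
noncomputable def kerP (e f : EQ T Λ) : ℝ :=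
  if headQ T Λ e = tailQ T Λ f then
    (if f = barQ T Λ e then ((indQ T Λ f : ℝ) - 1) else (indQ T Λ f : ℝ)) /
      ((degQ T Λ (headQ T Λ e) : ℝ) - 1)
  else 0

/-- The `n`-step transition kernel. -/
noncomputable def kerPn : ℕ → EQ T Λ → EQ T Λ → ℝ
  | 0, e, f => if e = f then 1 else 0
  | n + 1, e, f => ∑' g : EQ T Λ, kerPn n e g * kerP T Λ g f

/-- Adjacency in the quotient graph. -/
def AdjQ (u v : VQ Λ) : Prop :=
  ∃ e : EQ T Λ, tailQ T Λ e = u ∧ headQ T Λ e = v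

/-- Graph distance on the quotient graph. -/
noncomputable def distQ (u v : VQ Λ) : ℕ :=
  sInf {n : ℕ | ∃ f : ℕ → VQ Λ, f 0 = u ∧ f n = v ∧ ∀ i < n, AdjQ T Λ (f i) (f (i + 1))}

/-- Distance from a finite set of vertices of the quotient graph. -/
noncomputable def distToF (F : Finset (VQ Λ)) (v : VQ Λ) : ℕ :=
  sInf {n : ℕ | ∃ u ∈ F, distQ T Λ u v = n}

/-- `F` is a finite part for `Λ`: the complement of `F` in the quotient graph is a
disjoint union of finitely many open Nagao rays. -/
def IsFinitePart (F : Finset (VQ Λ)) : Prop :=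
  ∃ (k : ℕ) (ray : Fin k → ℕ → VQ Λ),
    (∀ v : VQ Λ, v ∉ F ↔ ∃ i n, ray i n = v) ∧
    (∀ i n j m, ray i n = ray j m → i = j ∧ n = m) ∧
    (∀ i n, ∃ e : EQ T Λ, tailQ T Λ e = ray i n ∧ headQ T Λ e = ray i (n + 1)) ∧
    (∀ i n, ∀ e f : EQ T Λ, tailQ T Λ e = ray i n → headQ T Λ e = ray i (n + 1) →
      tailQ T Λ f = ray i n → headQ T Λ f = ray i (n + 1) → e = f) ∧
    (∀ i n, ∀ e : EQ T Λ, tailQ T Λ e = ray i n → headQ T Λ e ∉ F →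
      headQ T Λ e = ray i (n + 1) ∨ ∃ m, n = m + 1 ∧ headQ T Λ e = ray i m) ∧
    (∀ i n, ∀ e : EQ T Λ, tailQ T Λ e = ray i n → headQ T Λ e = ray i (n + 1) →
      indQ T Λ e = 1) ∧
    (∀ i n, ∀ e : EQ T Λ, tailQ T Λ e = ray i (n + 1) → headQ T Λ e = ray i n →
      indQ T Λ e = degQ T Λ (ray i n) - 1)

/-- A tree lattice is geometrically finite if its quotient graph contains a nonempty
finite subgraph whose complement is a disjoint union of finitely many open Nagao rays. -/
def IsGeomFinite : Prop := ∃ F : Finset (VQ Λ), F.Nonempty ∧ IsFinitePart T Λ F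

/-- The mass that the projection to `VQ` of the uniform measure on the sphere
`S(vb,n)` gives to the vertex `q` of the quotient graph. -/
noncomputable def sphPush (vb : V) (n : ℕ) (q : VQ Λ) : ℝ :=
  (Nat.card {w : V // T.dist vb w = n ∧ πV Λ w = q} : ℝ) /
    (Nat.card {w : V // T.dist vb w = n} : ℝ)

/-- `ℙ_e(τ = i)` : the probability that the Markov chain started at `e` hits the set of
edges with terminal vertex in `F` for the first time at time `i`. -/
noncomputable def hitP (F : Finset (VQ Λ)) : ℕ → EQ T Λ → ℝ
  | 0, e => if headQ T Λ e ∈ F then 1 else 0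
  | i + 1, e => if headQ T Λ e ∈ F then 0 else ∑' f : EQ T Λ, kerP T Λ e f * hitP F i f

/-- `ℙ_e(τ' = i)` where `τ' = min {n | n ≥ τ, 2 ∣ n}`. -/
noncomputable def hitP' (F : Finset (VQ Λ)) (i : ℕ) (e : EQ T Λ) : ℝ :=
  if 2 ∣ i then hitP T Λ F i e + (if 1 ≤ i then hitP T Λ F (i - 1) e else 0) else 0

/-- `(Ω₀, Ω₁)` is the pair of cyclic classes of the (period two) kernel `P`. -/
def IsCyclicPair (Ω₀ Ω₁ : Set (EQ T Λ)) : Prop :=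
  (∀ e, e ∈ Ω₀ ∨ e ∈ Ω₁) ∧ (∀ e, ¬(e ∈ Ω₀ ∧ e ∈ Ω₁)) ∧
  (∀ e ∈ Ω₀, ∀ f, kerP T Λ e f ≠ 0 → f ∈ Ω₁) ∧
  (∀ e ∈ Ω₁, ∀ f, kerP T Λ e f ≠ 0 → f ∈ Ω₀)

/-- `Ω` is a cyclic class of the kernel `P`. -/
def IsCyclicClass (Ω : Set (EQ T Λ)) : Prop :=
  ∃ Ω', IsCyclicPair T Λ Ω Ω' ∨ IsCyclicPair T Λ Ω' Ω

theorem exists_stationary_probability_of_tsum_pos {α : Type*} {K : α → α → ℝ}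
    {m : α → ℝ} (hm : ∀ a, 0 ≤ m a) (hpos : 0 < ∑' a, m a)
    (hstat : ∀ b, ∑' a, m a * K a b = m b) :
    ∃ μ : α → ℝ, (∀ a, 0 ≤ μ a) ∧ ∑' a, μ a = 1 ∧
      ∀ b, ∑' a, μ a * K a b = μ b :=
  ⟨fun a => m a / ∑' a, m a, fun a => div_nonneg (hm a) hpos.le,
    by rw [tsum_div_const, div_self hpos.ne'],
    fun b => by simp_rw [div_mul_eq_mul_div, tsum_div_const, hstat]⟩

theorem IsBiregularTree.card_neighborSet {T : SimpleGraph V} {d₁ d₂ : ℕ}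
    (hT : IsBiregularTree T d₁ d₂) (x : V) :
    Nat.card (T.neighborSet x) = d₁ ∨ Nat.card (T.neighborSet x) = d₂ := by
  obtain ⟨-, -, c, -, hc₁, hc₂⟩ := hT
  cases h : c x
  · exact Or.inr (hc₂ x h)
  · exact Or.inl (hc₁ x h)

def DEdge.rev {T : SimpleGraph V} (e : DEdge T) : DEdge T := ⟨(e.1.2, e.1.1), e.2.symm⟩

section Quotient

variable {T Λ}

theorem vrel_equivalence : Equivalence (vrel Λ) where
  refl _ := ⟨1, Λ.one_mem, rfl⟩
  symm := by
    rintro x _ ⟨γ, hγ, rfl⟩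
    exact ⟨γ⁻¹, Λ.inv_mem hγ, Equiv.symm_apply_apply γ x⟩
  trans := by
    rintro x _ _ ⟨γ, hγ, rfl⟩ ⟨δ, hδ, rfl⟩
    exact ⟨δ * γ, Λ.mul_mem hδ hγ, rfl⟩

theorem erel_equivalence : Equivalence (erel T Λ) where
  refl _ := ⟨1, Λ.one_mem, rfl, rfl⟩
  symm := by
    rintro e f ⟨γ, hγ, h₁, h₂⟩
    exact ⟨γ⁻¹, Λ.inv_mem hγ, by rw [← h₁]; exact γ.symm_apply_apply _,
      by rw [← h₂]; exact γ.symm_apply_apply _⟩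
  trans := by
    rintro e f g ⟨γ, hγ, h₁, h₂⟩ ⟨δ, hδ, h₃, h₄⟩
    exact ⟨δ * γ, Λ.mul_mem hδ hγ, by rw [Equiv.Perm.mul_apply, h₁, h₃],
      by rw [Equiv.Perm.mul_apply, h₂, h₄]⟩

theorem πV_eq_iff {x y : V} : πV Λ x = πV Λ y ↔ vrel Λ x y :=
  Quot.eq.trans vrel_equivalence.eqvGen_iff

theorem πE_eq_iff {e f : DEdge T} : πE T Λ e = πE T Λ f ↔ erel T Λ e f :=
  Quot.eq.trans erel_equivalence.eqvGen_iff

theorem πE_surjective : Function.Surjective (πE T Λ) := Quot.mk_surjective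

theorem erel_out_πE (e : DEdge T) : erel T Λ (Quot.out (πE T Λ e)) e :=
  πE_eq_iff.1 (Quot.out_eq _)

theorem tailQ_πE (e : DEdge T) : tailQ T Λ (πE T Λ e) = πV Λ e.1.1 :=
  let ⟨γ, hγ, h, _⟩ := erel_out_πE e
  πV_eq_iff.2 ⟨γ, hγ, h⟩

theorem headQ_πE (e : DEdge T) : headQ T Λ (πE T Λ e) = πV Λ e.1.2 :=
  let ⟨γ, hγ, _, h⟩ := erel_out_πE e
  πV_eq_iff.2 ⟨γ, hγ, h⟩

theorem barQ_πE (e : DEdge T) : barQ T Λ (πE T Λ e) = πE T Λ e.rev :=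
  let ⟨γ, hγ, h₁, h₂⟩ := erel_out_πE e
  πE_eq_iff.2 ⟨γ, hγ, h₂, h₁⟩

theorem barQ_involutive : Function.Involutive (barQ T Λ) := by
  intro e
  obtain ⟨e, rfl⟩ := πE_surjective e
  rw [barQ_πE, barQ_πE]
  rfl

theorem tailQ_barQ (e : EQ T Λ) : tailQ T Λ (barQ T Λ e) = headQ T Λ e := by
  obtain ⟨e, rfl⟩ := πE_surjective e
  rw [barQ_πE, tailQ_πE, headQ_πE]
  rfl

theorem headQ_barQ (e : EQ T Λ) : headQ T Λ (barQ T Λ e) = tailQ T Λ e := by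
  rw [← tailQ_barQ, barQ_involutive]

end Quotient

section Stabilizers

variable {T Λ}

theorem stabV_eq_of_vrel {x y : V} (h : vrel Λ x y) : stabV Λ x = stabV Λ y := by
  obtain ⟨γ, hγ, rfl⟩ := h
  exact Nat.card_congr <| (MulAut.conj (⟨γ, hγ⟩ : Λ)).toEquiv.subtypeEquiv fun δ => by
    simp [MulAut.conj_apply, Equiv.Perm.mul_apply]

theorem stabE_eq_of_erel {e f : DEdge T} (h : erel T Λ e f) : stabE T Λ e = stabE T Λ f := by
  obtain ⟨γ, hγ, h₁, h₂⟩ := h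
  rw [stabE, stabE, ← h₁, ← h₂]
  exact Nat.card_congr <| (MulAut.conj (⟨γ, hγ⟩ : Λ)).toEquiv.subtypeEquiv fun δ => by
    simp [MulAut.conj_apply, Equiv.Perm.mul_apply]

theorem indQ_πE (e : DEdge T) : indQ T Λ (πE T Λ e) = stabV Λ e.1.1 / stabE T Λ e := by
  obtain ⟨γ, hγ, h₁, h₂⟩ := erel_out_πE (Λ := Λ) e
  rw [indQ, stabV_eq_of_vrel ⟨γ, hγ, h₁⟩, stabE_eq_of_erel ⟨γ, hγ, h₁, h₂⟩]

theorem card_orbit_stabilizer_eq_stabV_div_stabE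
    (hFin : ∀ x : V, Finite {γ : Λ // (γ : Equiv.Perm V) x = x}) (e : DEdge T) :
    Nat.card (MulAction.orbit (MulAction.stabilizer Λ e.1.1) e.1.2) =
      stabV Λ e.1.1 / stabE T Λ e := by
  set G := MulAction.stabilizer Λ e.1.1
  have : Finite G := hFin e.1.1
  have hG : Nat.card G = stabV Λ e.1.1 := rfl
  have hGe : Nat.card (MulAction.stabilizer G e.1.2) = stabE T Λ e :=
    Nat.card_congr <|
      Equiv.subtypeSubtypeEquivSubtypeInter (· ∈ G) fun γ => γ • e.1.2 = e.1.2
  rw [← hG, ← hGe, ← (MulAction.stabilizer G e.1.2).card_mul_index,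
    MulAction.index_stabilizer, Nat.card_coe_set_eq, Nat.mul_div_cancel_left _ Nat.card_pos]

theorem one_le_indQ (hFin : ∀ x : V, Finite {γ : Λ // (γ : Equiv.Perm V) x = x})
    (e : EQ T Λ) : 1 ≤ indQ T Λ e := by
  obtain ⟨e, rfl⟩ := πE_surjective e
  have : Finite (MulAction.stabilizer Λ e.1.1) := hFin e.1.1
  have : Finite (MulAction.orbit (MulAction.stabilizer Λ e.1.1) e.1.2) :=
    (Set.finite_range _).to_subtype
  have : Nonempty (MulAction.orbit (MulAction.stabilizer Λ e.1.1) e.1.2) :=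
    ⟨⟨_, MulAction.mem_orbit_self _⟩⟩
  rw [indQ_πE, ← card_orbit_stabilizer_eq_stabV_div_stabE hFin]
  exact Nat.card_pos

end Stabilizers

section OutEdges

variable {T Λ}

noncomputable def outEdge (v : VQ Λ) (w : T.neighborSet (Quot.out v)) :
    {g : EQ T Λ // tailQ T Λ g = v} :=
  ⟨πE T Λ ⟨(Quot.out v, w), w.2⟩, (tailQ_πE _).trans (Quot.out_eq v)⟩

theorem outEdge_surjective (hAut : ∀ γ ∈ Λ, ∀ u w : V, T.Adj u w → T.Adj (γ u) (γ w))
    (v : VQ Λ) : Function.Surjective (outEdge (T := T) v) := by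
  rintro ⟨g, hg⟩
  obtain ⟨γ, hγ, hx⟩ := πV_eq_iff.1 (hg.trans (Quot.out_eq v).symm)
  have hadj : T.Adj (Quot.out v) (γ (Quot.out g).1.2) := hx ▸ hAut γ hγ _ _ (Quot.out g).2
  refine ⟨⟨_, hadj⟩, Subtype.ext ?_⟩
  exact (πE_eq_iff.2 ⟨γ, hγ, hx, rfl⟩).symm.trans (Quot.out_eq g)

theorem outEdge_eq_outEdge_iff {v : VQ Λ} {w w₀ : T.neighborSet (Quot.out v)} :
    outEdge v w = outEdge v w₀ ↔
      (w : V) ∈ MulAction.orbit (MulAction.stabilizer Λ (Quot.out v)) (w₀ : V) := by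
  refine Subtype.ext_iff.trans <| eq_comm.trans <| πE_eq_iff.trans ?_
  rw [MulAction.mem_orbit_iff]
  constructor
  · rintro ⟨γ, hγ, h₁, h₂⟩
    exact ⟨⟨⟨γ, hγ⟩, h₁⟩, h₂⟩
  · rintro ⟨⟨⟨γ, hγ⟩, h₁⟩, h₂⟩
    exact ⟨γ, hγ, h₁, h₂⟩

theorem orbit_stabilizer_subset_neighborSet
    (hAut : ∀ γ ∈ Λ, ∀ u w : V, T.Adj u w → T.Adj (γ u) (γ w)) {x w : V}
    (hw : T.Adj x w) :
    MulAction.orbit (MulAction.stabilizer Λ x) w ⊆ T.neighborSet x := by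
  rintro _ ⟨⟨γ, hγx⟩, rfl⟩
  have := hAut γ γ.2 x w hw
  rwa [show (γ : Equiv.Perm V) x = x from hγx] at this

theorem card_outEdge_fiber (hAut : ∀ γ ∈ Λ, ∀ u w : V, T.Adj u w → T.Adj (γ u) (γ w))
    (hFin : ∀ x : V, Finite {γ : Λ // (γ : Equiv.Perm V) x = x})
    (v : VQ Λ) (w₀ : T.neighborSet (Quot.out v)) :
    Nat.card {w // outEdge v w = outEdge v w₀} = indQ T Λ (outEdge v w₀).1 := by
  refine Eq.trans ?_ ((card_orbit_stabilizer_eq_stabV_div_stabE hFin _).trans (indQ_πE _).symm)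
  refine Nat.card_congr <| (Equiv.subtypeEquivRight fun w => outEdge_eq_outEdge_iff).trans ?_
  exact Equiv.subtypeSubtypeEquivSubtype (orbit_stabilizer_subset_neighborSet hAut w₀.2 ·)

variable [∀ x : V, Finite (T.neighborSet x)]

theorem finite_outEdges (hAut : ∀ γ ∈ Λ, ∀ u w : V, T.Adj u w → T.Adj (γ u) (γ w))
    (v : VQ Λ) : Finite {g : EQ T Λ // tailQ T Λ g = v} :=
  Finite.of_surjective _ (outEdge_surjective hAut v)

theorem tsum_indQ_outEdges (hAut : ∀ γ ∈ Λ, ∀ u w : V, T.Adj u w → T.Adj (γ u) (γ w))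
    (hFin : ∀ x : V, Finite {γ : Λ // (γ : Equiv.Perm V) x = x}) (v : VQ Λ) :
    ∑' g : {g : EQ T Λ // tailQ T Λ g = v}, (indQ T Λ g : ℝ) = degQ T Λ v := by
  have := finite_outEdges hAut v
  have := Fintype.ofFinite {g : EQ T Λ // tailQ T Λ g = v}
  rw [tsum_fintype, degQ, ← Nat.card_congr (Equiv.sigmaFiberEquiv (outEdge v)), Nat.card_sigma]
  push_cast
  refine Finset.sum_congr rfl fun g _ => ?_
  obtain ⟨w₀, rfl⟩ := outEdge_surjective hAut v g
  rw [card_outEdge_fiber hAut hFin]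

end OutEdges

section Stationarity

variable {T Λ}

theorem kerP_barQ (g f : EQ T Λ) :
    kerP T Λ (barQ T Λ g) f =
      if tailQ T Λ g = tailQ T Λ f then
        ((indQ T Λ f : ℝ) - if g = f then 1 else 0) / ((degQ T Λ (tailQ T Λ f) : ℝ) - 1)
      else 0 := by
  simp only [kerP, headQ_barQ, barQ_involutive g, eq_comm (a := f)]
  split_ifs with h₁ h₂ <;> simp_all

theorem headQ_eq_tailQ_of_kerP_ne_zero {e f : EQ T Λ} (h : kerP T Λ e f ≠ 0) :
    headQ T Λ e = tailQ T Λ f :=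
  by_contra fun h' => h (if_neg h')

variable [∀ x : V, Finite (T.neighborSet x)]

theorem tsum_mul_kerP_eq_of_reversal_invariant
    (hAut : ∀ γ ∈ Λ, ∀ u w : V, T.Adj u w → T.Adj (γ u) (γ w))
    (hFin : ∀ x : V, Finite {γ : Λ // (γ : Equiv.Perm V) x = x})
    (hdeg : ∀ v, degQ T Λ v ≠ 1) {ρ : VQ Λ → ℝ}
    (hρ : ∀ e, indQ T Λ (barQ T Λ e) * ρ (headQ T Λ e) = indQ T Λ e * ρ (tailQ T Λ e))
    (f : EQ T Λ) :
    ∑' e, indQ T Λ e * ρ (tailQ T Λ e) * kerP T Λ e f = indQ T Λ f * ρ (tailQ T Λ f) := by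
  generalize hv : tailQ T Λ f = v
  have := finite_outEdges hAut v
  have hd : (degQ T Λ v : ℝ) - 1 ≠ 0 := sub_ne_zero.2 (by exact_mod_cast hdeg v)
  have hsupp : (Function.support fun e => indQ T Λ e * ρ (tailQ T Λ e) * kerP T Λ e f) ⊆
      Set.range fun g : {g : EQ T Λ // tailQ T Λ g = v} => barQ T Λ g := fun e he =>
    ⟨⟨barQ T Λ e, (tailQ_barQ e).trans
      ((headQ_eq_tailQ_of_kerP_ne_zero (right_ne_zero_of_mul he)).trans hv)⟩,
      barQ_involutive e⟩
  have hterm (g : {g : EQ T Λ // tailQ T Λ g = v}) :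
      indQ T Λ (barQ T Λ g) * ρ (tailQ T Λ (barQ T Λ g)) * kerP T Λ (barQ T Λ g) f =
        ρ v / ((degQ T Λ v : ℝ) - 1) *
          (indQ T Λ g * indQ T Λ f - if g = ⟨f, hv⟩ then (indQ T Λ f : ℝ) else 0) := by
    rw [tailQ_barQ, hρ, kerP_barQ, if_pos (g.2.trans hv.symm), g.2, hv]
    by_cases h : (g : EQ T Λ) = f
    · rw [if_pos h, if_pos (Subtype.ext h), h]
      field_simp
    · rw [if_neg h, if_neg (h ∘ congrArg Subtype.val)]
      field_simp
      ring
  rw [← (barQ_involutive.injective.comp Subtype.val_injective).tsum_eq hsupp]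
  simp only [Function.comp_apply, hterm]
  rw [tsum_mul_left, Summable.of_finite.tsum_sub Summable.of_finite, tsum_mul_right,
    tsum_indQ_outEdges hAut hFin, tsum_ite_eq]
  field_simp

end Stationarity

section Lattice

variable {T Λ}

theorem summable_indQ_mul [∀ x : V, Finite (T.neighborSet x)]
    (hAut : ∀ γ ∈ Λ, ∀ u w : V, T.Adj u w → T.Adj (γ u) (γ w))
    (hFin : ∀ x : V, Finite {γ : Λ // (γ : Equiv.Perm V) x = x})
    {D : ℕ} (hD : ∀ v, degQ T Λ v ≤ D) {ρ : VQ Λ → ℝ} (hρ₀ : ∀ v, 0 ≤ ρ v)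
    (hρ : Summable ρ) :
    Summable fun e => (indQ T Λ e : ℝ) * ρ (tailQ T Λ e) := by
  rw [← (Equiv.sigmaFiberEquiv (tailQ T Λ)).summable_iff]
  have hfiber (v : VQ Λ) : ∑' g : {g : EQ T Λ // tailQ T Λ g = v},
      (indQ T Λ g : ℝ) * ρ (tailQ T Λ g) = degQ T Λ v * ρ v := by
    rw [tsum_congr fun g => by rw [g.2], tsum_mul_right, tsum_indQ_outEdges hAut hFin]
  refine (summable_sigma_of_nonneg fun _ => mul_nonneg (Nat.cast_nonneg _) (hρ₀ _)).2
    ⟨fun v => have := finite_outEdges hAut v; Summable.of_finite, ?_⟩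
  refine .of_nonneg_of_le (fun v => ?_) (fun v => ?_) (hρ.mul_left (D : ℝ)) <;>
    simp only [Equiv.sigmaFiberEquiv_apply, hfiber]
  · exact mul_nonneg (Nat.cast_nonneg _) (hρ₀ v)
  · exact mul_le_mul_of_nonneg_right (by exact_mod_cast hD v) (hρ₀ v)

theorem indQ_barQ_mul_inv_headQ (hFin : ∀ x : V, Finite {γ : Λ // (γ : Equiv.Perm V) x = x})
    {N : VQ Λ → ℝ} (hN : ∀ e, N (headQ T Λ e) = deltaQ T Λ e * N (tailQ T Λ e))
    (e : EQ T Λ) :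
    indQ T Λ (barQ T Λ e) * (N (headQ T Λ e))⁻¹ = indQ T Λ e * (N (tailQ T Λ e))⁻¹ := by
  have hind : (indQ T Λ (barQ T Λ e) : ℝ) ≠ 0 :=
    Nat.cast_ne_zero.2 (Nat.one_le_iff_ne_zero.1 (one_le_indQ hFin _))
  rw [hN, deltaQ, mul_inv, inv_div, ← mul_assoc, mul_div_cancel₀ _ hind]

end Lattice

theorem markov_chain_positive_recurrent_of_geomFinite_general {V : Type*} (T : SimpleGraph V)
    (d₁ d₂ : ℕ) (hd₁ : 3 ≤ d₁) (hd₂ : 3 ≤ d₂) (hT : IsBiregularTree T d₁ d₂)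
    (Λ : Subgroup (Equiv.Perm V)) (hΛ : IsTreeLattice T Λ) :
    ∃ μ : EQ T Λ → ℝ, (∀ e, 0 ≤ μ e) ∧ (∑' e : EQ T Λ, μ e) = 1 ∧
      ∀ f : EQ T Λ, (∑' e : EQ T Λ, μ e * kerP T Λ e f) = μ f := by
  obtain ⟨hTreeAut, hFin, o, N, -, hNpos, hN, hNsum⟩ := hΛ
  have hAut : ∀ γ ∈ Λ, ∀ u w : V, T.Adj u w → T.Adj (γ u) (γ w) :=
    fun γ hγ u w => ((hTreeAut γ hγ).1 u w).2
  have hdeg (x : V) :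
      3 ≤ Nat.card (T.neighborSet x) ∧ Nat.card (T.neighborSet x) ≤ max d₁ d₂ := by
    rcases hT.card_neighborSet x with h | h <;> rw [h] <;> omega
  have : ∀ x, Finite (T.neighborSet x) :=
    fun x => Nat.finite_of_card_ne_zero (by have := (hdeg x).1; omega)
  have hm (e : EQ T Λ) : 0 < (indQ T Λ e : ℝ) * (N (tailQ T Λ e))⁻¹ :=
    mul_pos (by exact_mod_cast one_le_indQ hFin e) (inv_pos.2 (hNpos _))
  have hstat := tsum_mul_kerP_eq_of_reversal_invariant (ρ := fun v => (N v)⁻¹) hAut hFin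
    (fun v => by have := (hdeg (Quot.out v)).1; unfold degQ; omega)
    (indQ_barQ_mul_inv_headQ hFin hN)
  have hsum := summable_indQ_mul hAut hFin (fun v => (hdeg (Quot.out v)).2)
    (fun v => (inv_pos.2 (hNpos v)).le) hNsum
  obtain ⟨w⟩ : Nonempty (T.neighborSet (Quot.out o)) :=
    (Nat.card_ne_zero.1 (by have := (hdeg (Quot.out o)).1; omega)).1
  exact exists_stationary_probability_of_tsum_pos (fun e => (hm e).le)
    (hsum.tsum_pos (fun e => (hm e).le) (outEdge o w) (hm _)) hstat

/-- Lemma 3.2. The Markov chain associated to a geometrically finite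
tree lattice is positive recurrent: it admits a stationary probability measure. -/
theorem markov_chain_positive_recurrent_of_geomFinite {V : Type*} (T : SimpleGraph V)
    (d₁ d₂ : ℕ) (hd₁ : 3 ≤ d₁) (hd₂ : 3 ≤ d₂) (hT : IsBiregularTree T d₁ d₂)
    (Λ : Subgroup (Equiv.Perm V)) (hΛ : IsTreeLattice T Λ)
    (hGF : IsGeomFinite T Λ) :
    ∃ μ : EQ T Λ → ℝ, (∀ e, 0 ≤ μ e) ∧ (∑' e : EQ T Λ, μ e) = 1 ∧
      ∀ f : EQ T Λ, (∑' e : EQ T Λ, μ e * kerP T Λ e f) = μ f :=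
  markov_chain_positive_recurrent_of_geomFinite_general T d₁ d₂ hd₁ hd₂ hT Λ hΛ

end TreeDyn
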